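/- (Proposition 1, n = 2 odd factor.) For all real θ₅, θ₇, θ₁₁, θ₁₄, the matrix M₁ᵒ = P₍₂,₃₎ · exp((i·θ₅) • U₅) · exp((i·θ₇) • U₇) · exp((i·θ₁₁) • U₁₁) · exp((i·θ₁₄) • U₁₄) · P₍₂,₃₎ is 2×2-block-diagonal with SU(2) blocks. -/

import Mathlib

open Matrix Complex

noncomputable def U₁ : Matrix (Fin 4) (Fin 4) ℂ :=
  !![0, 1, 0, 0; 1, 0, 0, 0; 0, 0, 1, 0; 0, 0, 0, -1]

noncomputable def U₂ : Matrix (Fin 4) (Fin 4) ℂ :=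
  !![0, -I, 0, 0; I, 0, 0, 0; 0, 0, 1, 0; 0, 0, 0, -1]

noncomputable def U₃ : Matrix (Fin 4) (Fin 4) ℂ :=
  !![1, 0, 0, 0; 0, -1, 0, 0; 0, 0, 1, 0; 0, 0, 0, -1]

noncomputable def U₄ : Matrix (Fin 4) (Fin 4) ℂ :=
  !![1, 0, 0, 0; 0, 0, 1, 0; 0, 1, 0, 0; 0, 0, 0, -1]

noncomputable def U₅ : Matrix (Fin 4) (Fin 4) ℂ :=
  !![0, 0, 1, 0; 0, 1, 0, 0; 1, 0, 0, 0; 0, 0, 0, -1]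

noncomputable def U₆ : Matrix (Fin 4) (Fin 4) ℂ :=
  !![1, 0, 0, 0; 0, 0, -I, 0; 0, I, 0, 0; 0, 0, 0, -1]

noncomputable def U₇ : Matrix (Fin 4) (Fin 4) ℂ :=
  !![0, 0, -I, 0; 0, 1, 0, 0; I, 0, 0, 0; 0, 0, 0, -1]

noncomputable def U₈ : Matrix (Fin 4) (Fin 4) ℂ :=
  !![1, 0, 0, 0; 0, 1, 0, 0; 0, 0, -1, 0; 0, 0, 0, -1]

noncomputable def U₉ : Matrix (Fin 4) (Fin 4) ℂ :=
  !![1, 0, 0, 0; 0, -1, 0, 0; 0, 0, 0, 1; 0, 0, 1, 0]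

noncomputable def U₁₀ : Matrix (Fin 4) (Fin 4) ℂ :=
  !![0, 0, 0, 1; 0, -1, 0, 0; 0, 0, 1, 0; 1, 0, 0, 0]

noncomputable def U₁₁ : Matrix (Fin 4) (Fin 4) ℂ :=
  !![1, 0, 0, 0; 0, 0, 0, 1; 0, 0, -1, 0; 0, 1, 0, 0]

noncomputable def U₁₂ : Matrix (Fin 4) (Fin 4) ℂ :=
  !![1, 0, 0, 0; 0, -1, 0, 0; 0, 0, 0, -I; 0, 0, I, 0]

noncomputable def U₁₃ : Matrix (Fin 4) (Fin 4) ℂ :=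
  !![0, 0, 0, -I; 0, -1, 0, 0; 0, 0, 1, 0; I, 0, 0, 0]

noncomputable def U₁₄ : Matrix (Fin 4) (Fin 4) ℂ :=
  !![1, 0, 0, 0; 0, 0, 0, -I; 0, 0, -1, 0; 0, I, 0, 0]

noncomputable def U₁₅ : Matrix (Fin 4) (Fin 4) ℂ :=
  !![1, 0, 0, 0; 0, -1, 0, 0; 0, 0, -1, 0; 0, 0, 0, 1]

/-- 4×4 permutation matrix exchanging the 2nd and 4th standard basis vectors. -/
def P₂₄ : Matrix (Fin 4) (Fin 4) ℂ :=
  !![1, 0, 0, 0; 0, 0, 0, 1; 0, 0, 1, 0; 0, 1, 0, 0]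

/-- 4×4 permutation matrix exchanging the 2nd and 3rd standard basis vectors. -/
def P₂₃ : Matrix (Fin 4) (Fin 4) ℂ :=
  !![1, 0, 0, 0; 0, 0, 1, 0; 0, 1, 0, 0; 0, 0, 0, 1]

/-- The top-left 2×2 block of a 4×4 matrix. -/
noncomputable def topBlock (M : Matrix (Fin 4) (Fin 4) ℂ) : Matrix (Fin 2) (Fin 2) ℂ :=
  !![M 0 0, M 0 1; M 1 0, M 1 1]

/-- The bottom-right 2×2 block of a 4×4 matrix. -/
noncomputable def botBlock (M : Matrix (Fin 4) (Fin 4) ℂ) : Matrix (Fin 2) (Fin 2) ℂ :=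
  !![M 2 2, M 2 3; M 3 2, M 3 3]

/-- A 2×2 complex matrix is special unitary. -/
def IsSU2 (A : Matrix (Fin 2) (Fin 2) ℂ) : Prop :=
  A * Aᴴ = 1 ∧ Aᴴ * A = 1 ∧ A.det = 1

/-- A 4×4 complex matrix is 2×2-block-diagonal with SU(2) blocks: every entry whose
row index and column index lie on opposite sides of the 2|2 partition vanishes, and
both 2×2 diagonal blocks are unitary with determinant 1. -/
def IsBlockDiagSU2 (M : Matrix (Fin 4) (Fin 4) ℂ) : Prop :=
  (∀ i j : Fin 4,
      (((i : ℕ) < 2 ∧ ¬ (j : ℕ) < 2) ∨ (¬ (i : ℕ) < 2 ∧ (j : ℕ) < 2)) → M i j = 0) ∧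
  IsSU2 (topBlock M) ∧ IsSU2 (botBlock M)

/-!
Conjugation by `P₂₃` is the algebra automorphism of `Matrix (Fin 4) (Fin 4) ℂ` reindexing rows and
columns by the transposition `(2 3)`, so it distributes over the product. It carries each of
`U₅, U₇, U₁₁, U₁₄` to a block-diagonal matrix whose two blocks are Pauli matrices. In particular
each `U` is an involution, so `exp (iθ U) = cos θ + i sin θ U`, and for a Hermitian traceless
involution `σ` of `ℂ²` the matrix `cos θ + i sin θ σ` lies in `SU(2)`. So every conjugated factor
lies in the image of `SU(2) × SU(2)`, which is a submonoid.
-/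

theorem exp_I_mul_smul_of_mul_self_eq_one {𝔸 : Type*} [Ring 𝔸] [Algebra ℂ 𝔸]
    [TopologicalSpace 𝔸] [IsTopologicalRing 𝔸] [T2Space 𝔸] [ContinuousSMul ℂ 𝔸] {U : 𝔸}
    (hU : U * U = 1) (z : ℂ) :
    NormedSpace.exp ((I * z) • U) = Complex.cos z • 1 + (I * Complex.sin z) • U := by
  have hU2 : U ^ 2 = 1 := by rw [sq, hU]
  rw [NormedSpace.exp_eq_tsum ℂ]
  refine HasSum.tsum_eq (HasSum.even_add_odd ?_ ?_)
  · convert (Complex.hasSum_cos z).smul_const (1 : 𝔸) using 2 with k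
    rw [smul_pow, pow_mul U, hU2, one_pow, smul_smul, mul_pow, pow_mul I, I_sq]
    congr 1
    field_simp
  · convert ((Complex.hasSum_sin z).mul_left I).smul_const U using 2 with k
    rw [smul_pow, pow_succ U, pow_mul U, hU2, one_pow, one_mul, smul_smul, pow_succ, mul_pow,
      pow_mul I, I_sq]
    congr 1
    field_simp
    ring

namespace Matrix

variable (R : Type*) {m n : Type*} [CommSemiring R] [Fintype m] [Fintype n] [DecidableEq m]
  [DecidableEq n]

def fromBlocksDiagAlgHom : Matrix m m R × Matrix n n R →ₐ[R] Matrix (m ⊕ n) (m ⊕ n) R where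
  toFun p := fromBlocks p.1 0 0 p.2
  map_one' := fromBlocks_one
  map_mul' p q := by simp [fromBlocks_multiply]
  map_zero' := fromBlocks_zero
  map_add' p q := by simp [fromBlocks_add]
  commutes' r := by
    simp only [Prod.algebraMap_apply, algebraMap_eq_diagonal, fromBlocks_diagonal]
    congr 1
    ext (i | i) <;> rfl

end Matrix

noncomputable def blockDiag₂ :
    Matrix (Fin 2) (Fin 2) ℂ × Matrix (Fin 2) (Fin 2) ℂ →ₐ[ℂ] Matrix (Fin 4) (Fin 4) ℂ :=
  (reindexAlgEquiv ℂ ℂ finSumFinEquiv).toAlgHom.comp (fromBlocksDiagAlgHom ℂ)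

noncomputable def blockDiagSU2 : Submonoid (Matrix (Fin 4) (Fin 4) ℂ) :=
  ((specialUnitaryGroup (Fin 2) ℂ).prod (specialUnitaryGroup (Fin 2) ℂ)).map blockDiag₂

theorem isSU2_of_mem_specialUnitaryGroup {A : Matrix (Fin 2) (Fin 2) ℂ}
    (hA : A ∈ specialUnitaryGroup (Fin 2) ℂ) : IsSU2 A := by
  obtain ⟨hU, hdet⟩ := mem_specialUnitaryGroup_iff.mp hA
  exact ⟨mem_unitaryGroup_iff.mp hU, mem_unitaryGroup_iff'.mp hU, hdet⟩

theorem isBlockDiagSU2_of_mem_blockDiagSU2 {M : Matrix (Fin 4) (Fin 4) ℂ}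
    (hM : M ∈ blockDiagSU2) : IsBlockDiagSU2 M := by
  obtain ⟨⟨A, B⟩, ⟨hA, hB⟩, rfl⟩ := hM
  refine ⟨?_, ?_, ?_⟩
  · intro i j h
    fin_cases i <;> fin_cases j <;> first | rfl | (exfalso; simp at h)
  · convert isSU2_of_mem_specialUnitaryGroup hA using 1
    ext i j; fin_cases i <;> fin_cases j <;> rfl
  · convert isSU2_of_mem_specialUnitaryGroup hB using 1
    ext i j; fin_cases i <;> fin_cases j <;> rfl

/-- Hermitian traceless involutions of `ℂ²` are exactly the `n₁ σ₁ + n₂ σ₂ + n₃ σ₃` with `σᵢ` the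
Pauli matrices and `n` a real unit vector. -/
structure IsPauli (σ : Matrix (Fin 2) (Fin 2) ℂ) : Prop where
  isHermitian : σ.IsHermitian
  mul_self : σ * σ = 1
  trace_eq_zero : σ.trace = 0

theorem IsPauli.smul_one_add_I_mul_smul_mem_specialUnitaryGroup
    {σ : Matrix (Fin 2) (Fin 2) ℂ} (hσ : IsPauli σ) {a b : ℝ} (hab : a ^ 2 + b ^ 2 = 1) :
    (a : ℂ) • 1 + (I * b) • σ ∈ specialUnitaryGroup (Fin 2) ℂ := by
  have hab' : (a : ℂ) ^ 2 + (b : ℂ) ^ 2 = 1 := by exact_mod_cast hab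
  refine mem_specialUnitaryGroup_iff.mpr ⟨mem_unitaryGroup_iff.mpr ?_, ?_⟩
  · have hstar : star ((a : ℂ) • (1 : Matrix (Fin 2) (Fin 2) ℂ) + (I * b) • σ)
        = (a : ℂ) • 1 - (I * b) • σ := by
      rw [star_add, star_smul, star_smul, star_one, star_eq_conjTranspose, hσ.isHermitian.eq]
      simp [sub_eq_add_neg]
    rw [hstar]
    simp only [add_mul, mul_sub, smul_mul_smul_comm, one_mul, mul_one, hσ.mul_self]
    linear_combination (norm := module) (hab' - (b : ℂ) ^ 2 * I_sq) • (1 : Matrix (Fin 2) (Fin 2) ℂ)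
  · have h00 : σ 0 0 * σ 0 0 + σ 0 1 * σ 1 0 = 1 := by
      simpa [mul_apply, Fin.sum_univ_two] using congrFun (congrFun hσ.mul_self 0) 0
    have htr : σ 0 0 + σ 1 1 = 0 := by simpa [trace_fin_two] using hσ.trace_eq_zero
    rw [det_fin_two]
    simp only [Matrix.add_apply, Matrix.smul_apply, one_apply_eq, one_apply_ne, ne_eq, zero_ne_one,
      one_ne_zero, not_false_eq_true, smul_eq_mul, mul_one]
    linear_combination hab' + (b : ℂ) ^ 2 * h00 + (I * a * b - b ^ 2 * σ 0 0) * htr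
      + (b ^ 2 * σ 0 0 * σ 1 1 - b ^ 2 * σ 0 1 * σ 1 0) * I_sq

def pauliX : Matrix (Fin 2) (Fin 2) ℂ := !![0, 1; 1, 0]

def pauliY : Matrix (Fin 2) (Fin 2) ℂ := !![0, -I; I, 0]

def pauliZ : Matrix (Fin 2) (Fin 2) ℂ := !![1, 0; 0, -1]

theorem isPauli_pauliX : IsPauli pauliX where
  isHermitian := by ext i j; fin_cases i <;> fin_cases j <;> simp [pauliX]
  mul_self := by ext i j; fin_cases i <;> fin_cases j <;> simp [pauliX]
  trace_eq_zero := by simp [pauliX, trace_fin_two]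

theorem isPauli_pauliY : IsPauli pauliY where
  isHermitian := by ext i j; fin_cases i <;> fin_cases j <;> simp [pauliY]
  mul_self := by ext i j; fin_cases i <;> fin_cases j <;> simp [pauliY]
  trace_eq_zero := by simp [pauliY, trace_fin_two]

theorem isPauli_pauliZ : IsPauli pauliZ where
  isHermitian := by ext i j; fin_cases i <;> fin_cases j <;> simp [pauliZ]
  mul_self := by ext i j; fin_cases i <;> fin_cases j <;> simp [pauliZ]
  trace_eq_zero := by simp [pauliZ, trace_fin_two]

def conjP₂₃ : Matrix (Fin 4) (Fin 4) ℂ ≃ₐ[ℂ] Matrix (Fin 4) (Fin 4) ℂ :=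
  reindexAlgEquiv ℂ ℂ (Equiv.swap 1 2)

theorem P₂₃_mul_mul_P₂₃ (X : Matrix (Fin 4) (Fin 4) ℂ) : P₂₃ * X * P₂₃ = conjP₂₃ X := by
  ext i j
  fin_cases i <;> fin_cases j <;>
    simp [P₂₃, conjP₂₃, mul_apply, vecMul, dotProduct, Fin.sum_univ_four,
      Equiv.swap_apply_of_ne_of_ne]

theorem conjP₂₃_U₅ : conjP₂₃ U₅ = blockDiag₂ (pauliX, pauliZ) := by
  ext i j; fin_cases i <;> fin_cases j <;> rfl

theorem conjP₂₃_U₇ : conjP₂₃ U₇ = blockDiag₂ (pauliY, pauliZ) := by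
  ext i j; fin_cases i <;> fin_cases j <;> rfl

theorem conjP₂₃_U₁₁ : conjP₂₃ U₁₁ = blockDiag₂ (pauliZ, pauliX) := by
  ext i j; fin_cases i <;> fin_cases j <;> rfl

theorem conjP₂₃_U₁₄ : conjP₂₃ U₁₄ = blockDiag₂ (pauliZ, pauliY) := by
  ext i j; fin_cases i <;> fin_cases j <;> rfl

theorem conjP₂₃_exp_mem_blockDiagSU2 {U : Matrix (Fin 4) (Fin 4) ℂ}
    {σ τ : Matrix (Fin 2) (Fin 2) ℂ} (hσ : IsPauli σ) (hτ : IsPauli τ)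
    (hU : conjP₂₃ U = blockDiag₂ (σ, τ)) (θ : ℝ) :
    conjP₂₃ (NormedSpace.exp ((I * θ) • U)) ∈ blockDiagSU2 := by
  have hUU : U * U = 1 := conjP₂₃.injective <| by
    rw [map_mul, hU, ← map_mul, Prod.mk_mul_mk, hσ.mul_self, hτ.mul_self, Prod.mk_one_one,
      map_one, map_one]
  have hblock : conjP₂₃ ((Real.cos θ : ℂ) • 1 + (I * Real.sin θ) • U) =
      blockDiag₂ ((Real.cos θ : ℂ) • 1 + (I * Real.sin θ) • σ,
        (Real.cos θ : ℂ) • 1 + (I * Real.sin θ) • τ) := by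
    rw [map_add, map_smul, map_smul, map_one, hU, ← map_one blockDiag₂, ← map_smul, ← map_smul,
      ← map_add]
    rfl
  rw [exp_I_mul_smul_of_mul_self_eq_one hUU, ← ofReal_cos, ← ofReal_sin, hblock]
  exact Submonoid.mem_map_of_mem _
    ⟨hσ.smul_one_add_I_mul_smul_mem_specialUnitaryGroup (Real.cos_sq_add_sin_sq θ),
      hτ.smul_one_add_I_mul_smul_mem_specialUnitaryGroup (Real.cos_sq_add_sin_sq θ)⟩

theorem M1_odd_blockDiag_SU2 (θ₅ θ₇ θ₁₁ θ₁₄ : ℝ) :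
    IsBlockDiagSU2
      (P₂₃ * NormedSpace.exp ((I * (θ₅ : ℂ)) • U₅)
           * NormedSpace.exp ((I * (θ₇ : ℂ)) • U₇)
           * NormedSpace.exp ((I * (θ₁₁ : ℂ)) • U₁₁)
           * NormedSpace.exp ((I * (θ₁₄ : ℂ)) • U₁₄) * P₂₃) := by
  have h := mul_mem (mul_mem (mul_mem
    (conjP₂₃_exp_mem_blockDiagSU2 isPauli_pauliX isPauli_pauliZ conjP₂₃_U₅ θ₅)
    (conjP₂₃_exp_mem_blockDiagSU2 isPauli_pauliY isPauli_pauliZ conjP₂₃_U₇ θ₇))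
    (conjP₂₃_exp_mem_blockDiagSU2 isPauli_pauliZ isPauli_pauliX conjP₂₃_U₁₁ θ₁₁))
    (conjP₂₃_exp_mem_blockDiagSU2 isPauli_pauliZ isPauli_pauliY conjP₂₃_U₁₄ θ₁₄)
  rw [← map_mul, ← map_mul, ← map_mul, ← P₂₃_mul_mul_P₂₃] at h
  simpa only [mul_assoc] using isBlockDiagSU2_of_mem_blockDiagSU2 h
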